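/- Let A and B be unbounded self-adjoint operators on a complex Hilbert space H such that B is invertible, AB ⊂ BA, and AB is densely defined. Then BA is self-adjoint. -/

import Mathlib

/-!
Write `C = B⁻¹`, a bounded self-adjoint operator. In terms of graphs, `(x, z)` lies in the graph
of `BA` iff `(x, C z)` lies in the graph of `A`, and `AB ⊂ BA` says exactly that `C` maps the
graph of `A` into itself. From this `BA` is closed, `C` commutes with `BA`, and `(BA)* ⊂ BA`
follows by testing against the vectors `C w`, `w ∈ D(A)`.

The symmetry of `BA` only comes for free in the weighted form `⟪BA x, C y⟫ = ⟪C x, BA y⟫`.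
To remove the weight, regularise with `(C² + ε²)⁻¹`: it is the inverse of a self-adjoint
element of the closed algebra of bounded operators commuting with `BA`, so by spectral
permanence it lies in that algebra as well. Since `C² (C² + ε²)⁻¹ = 1 - ε² (C² + ε²)⁻¹` and
`ε² (C² + ε²)⁻¹` has norm at most `1` and tends to `0` on the dense range of `C`, it tends
strongly to `1` as `ε → 0`, and the weighted identity passes to the limit.
-/

open LinearPMap InnerProductSpace

variable {H : Type*} [NormedAddCommGroup H] [InnerProductSpace ℂ H] [CompleteSpace H]

/-- The domain `{x ∈ D(A) : A x ∈ D(B)}` of the product `B ∘ A` of two unbounded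
operators. -/
def LinearPMap.prodDomain (B A : H →ₗ.[ℂ] H) : Submodule ℂ H where
  carrier := {x | ∃ hx : x ∈ A.domain, A ⟨x, hx⟩ ∈ B.domain}
  add_mem' := by
    rintro x y ⟨hx, hx'⟩ ⟨hy, hy'⟩
    refine ⟨add_mem hx hy, ?_⟩
    have h1 : (⟨x + y, add_mem hx hy⟩ : A.domain) = ⟨x, hx⟩ + ⟨y, hy⟩ := rfl
    rw [h1, A.map_add]
    exact add_mem hx' hy'
  zero_mem' := by
    refine ⟨zero_mem _, ?_⟩
    have h1 : (⟨0, zero_mem _⟩ : A.domain) = 0 := rfl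
    rw [h1, A.map_zero]
    exact zero_mem _
  smul_mem' := by
    rintro c x ⟨hx, hx'⟩
    refine ⟨Submodule.smul_mem _ c hx, ?_⟩
    have h1 : (⟨c • x, Submodule.smul_mem _ c hx⟩ : A.domain) = c • ⟨x, hx⟩ := rfl
    rw [h1, A.map_smul]
    exact Submodule.smul_mem _ c hx'

theorem LinearPMap.prodDomain_le (B A : H →ₗ.[ℂ] H) : B.prodDomain A ≤ A.domain :=
  fun _ hx => hx.1

/-- The product `B ∘ A` of two unbounded operators, given by `x ↦ B (A x)` on the
domain `{x ∈ D(A) : A x ∈ D(B)}`. -/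
noncomputable def LinearPMap.prodOp (B A : H →ₗ.[ℂ] H) : H →ₗ.[ℂ] H where
  domain := B.prodDomain A
  toFun := B.toFun.comp <|
    ((A.toFun.comp (Submodule.inclusion (B.prodDomain_le A))).codRestrict B.domain
      (fun x => x.2.choose_spec))

/-- An unbounded operator is densely defined if its domain is dense. -/
def LinearPMap.DenselyDefined (A : H →ₗ.[ℂ] H) : Prop :=
  Dense (A.domain : Set H)

/-- An unbounded operator is normal if it is closed and `A†A = AA†`. -/
noncomputable def LinearPMap.IsNormalOp (A : H →ₗ.[ℂ] H) : Prop :=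
  A.IsClosed ∧ A.adjoint.prodOp A = A.prodOp A.adjoint

/-- An unbounded operator `B` is invertible if there is an everywhere-defined bounded
operator `B⁻¹` with `B⁻¹ B ⊂ B B⁻¹ = I`. -/
def LinearPMap.IsInvertibleOp (B : H →ₗ.[ℂ] H) : Prop :=
  ∃ Binv : H →L[ℂ] H, (∀ x : B.domain, Binv (B x) = x) ∧
    ∀ y : H, ∃ hy : Binv y ∈ B.domain, B ⟨Binv y, hy⟩ = y

open Filter Topology

theorem Commute.ringInverse_right {M₀ : Type*} [MonoidWithZero M₀] {a b : M₀} (h : Commute a b) :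
    Commute a (Ring.inverse b) := by
  by_cases hb : IsUnit b
  · rw [Ring.inverse_of_isUnit hb]
    exact Commute.units_inv_right (u := hb.unit) h
  · rw [Ring.inverse_non_unit b hb]
    exact Commute.zero_right a

/-- Spectral permanence: the spectrum of a self-adjoint element is real, so its complement is
connected and the spectrum does not grow in a closed subalgebra. -/
theorem Subalgebra.ringInverse_mem_of_isSelfAdjoint {A : Type*} [CStarAlgebra A]
    {S : Subalgebra ℂ A} (hS : IsClosed (S : Set A)) {a : A} (ha : IsSelfAdjoint a) (haS : a ∈ S) :
    Ring.inverse a ∈ S := by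
  by_cases hunit : IsUnit a
  · have hunitS : IsUnit (⟨a, haS⟩ : S) := by
      rw [← spectrum.zero_notMem_iff ℂ, Subalgebra.spectrum_eq_of_isPreconnected_compl (hS := hS)
        S _ ha.isConnected_spectrum_compl.isPreconnected]
      exact (spectrum.zero_notMem_iff ℂ).2 hunit
    have hinv : ((hunitS.unit⁻¹ : Sˣ) : A) * a = 1 := congrArg Subtype.val hunitS.val_inv_mul
    rw [Ring.inverse_of_isUnit hunit, hunit.unit.inv_eq_of_mul_eq_one_left hinv]
    exact SetLike.coe_mem _
  · rw [Ring.inverse_non_unit a hunit]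
    exact S.zero_mem

namespace LinearPMap

section Commutant

variable {𝕜 E : Type*} [NontriviallyNormedField 𝕜] [NormedAddCommGroup E] [NormedSpace 𝕜 E]

/-- The bounded operators `R` with `R T ⊂ T R`. -/
def commutant (T : E →ₗ.[𝕜] E) : Subalgebra 𝕜 (E →L[𝕜] E) where
  carrier := {R | ∀ p ∈ T.graph, (R p.1, R p.2) ∈ T.graph}
  mul_mem' hR hS p hp := hR _ (hS p hp)
  add_mem' hR hS p hp := T.graph.add_mem (hR p hp) (hS p hp)
  algebraMap_mem' c p hp := by
    simpa [Algebra.algebraMap_eq_smul_one] using T.graph.smul_mem c hp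

theorem isClosed_commutant {T : E →ₗ.[𝕜] E} (hT : T.IsClosed) :
    _root_.IsClosed (T.commutant : Set (E →L[𝕜] E)) := by
  show _root_.IsClosed {R : E →L[𝕜] E | ∀ p ∈ T.graph, (R p.1, R p.2) ∈ T.graph}
  simp only [Set.ofPred_forall]
  exact isClosed_iInter fun p => isClosed_iInter fun _ =>
    hT.preimage ((continuous_eval_const p.1).prodMk (continuous_eval_const p.2))

end Commutant

section Inverse

variable {E : Type*} [NormedAddCommGroup E] [InnerProductSpace ℂ E]

theorem IsInvertibleOp.exists_mem_graph_iff {B : E →ₗ.[ℂ] E} (hB : B.IsInvertibleOp) :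
    ∃ C : E →L[ℂ] E, ∀ y z, (y, z) ∈ B.graph ↔ y = C z := by
  obtain ⟨C, hCB, hBC⟩ := hB
  refine ⟨C, fun y z => ⟨?_, ?_⟩⟩
  · rw [mem_graph_iff]
    rintro ⟨y, rfl, rfl⟩
    exact (hCB y).symm
  · rintro rfl
    obtain ⟨hz, hBz⟩ := hBC z
    exact B.mem_graph_iff.2 ⟨⟨C z, hz⟩, rfl, hBz⟩

end Inverse

section SelfAdjoint

variable {E : Type*} [NormedAddCommGroup E] [InnerProductSpace ℂ E] [CompleteSpace E]

theorem isSelfAdjoint_iff_adjoint_graph_eq {T : E →ₗ.[ℂ] E} (hT : Dense (T.domain : Set E)) :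
    IsSelfAdjoint T ↔ T.graph.adjoint = T.graph := by
  rw [isSelfAdjoint_def, ← adjoint_graph_eq_graph_adjoint hT]
  exact ⟨congrArg graph, eq_of_eq_graph⟩

theorem _root_.IsSelfAdjoint.inner_eq_of_mem_graph {A : E →ₗ.[ℂ] E} (hA : IsSelfAdjoint A)
    {x a y b : E} (hxa : (x, a) ∈ A.graph) (hyb : (y, b) ∈ A.graph) : ⟪a, y⟫_ℂ = ⟪x, b⟫_ℂ := by
  rw [← (isSelfAdjoint_iff_adjoint_graph_eq hA.dense_domain).1 hA] at hyb
  exact sub_eq_zero.1 ((Submodule.mem_adjoint_iff _ _).1 hyb x a hxa)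

theorem isSelfAdjoint_of_mem_graph_iff {B : E →ₗ.[ℂ] E} (hB : IsSelfAdjoint B) {C : E →L[ℂ] E}
    (hBC : ∀ y z, (y, z) ∈ B.graph ↔ y = C z) : IsSelfAdjoint C := by
  rw [ContinuousLinearMap.isSelfAdjoint_iff_isSymmetric]
  intro z w
  exact (hB.inner_eq_of_mem_graph ((hBC _ _).2 rfl) ((hBC _ _).2 rfl)).symm

end SelfAdjoint

section Regularization

variable {E : Type*} [NormedAddCommGroup E] [InnerProductSpace ℂ E] {C : E →L[ℂ] E}

noncomputable def sqAddInv (C : E →L[ℂ] E) (ε : ℝ) : E →L[ℂ] E :=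
  Ring.inverse (C ^ 2 + algebraMap ℝ (E →L[ℂ] E) (ε ^ 2))

theorem commute_sqAddInv (C : E →L[ℂ] E) (ε : ℝ) : Commute C (sqAddInv C ε) :=
  Commute.ringInverse_right <|
    ((Commute.refl C).pow_right 2).add_right (Algebra.commutes (ε ^ 2) C).symm

variable [CompleteSpace E]

theorem isStrictlyPositive_sq_add (hC : IsSelfAdjoint C) {ε : ℝ} (hε : ε ≠ 0) :
    IsStrictlyPositive (C ^ 2 + algebraMap ℝ (E →L[ℂ] E) (ε ^ 2)) := by
  have hC2 : 0 ≤ C ^ 2 := by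
    rw [sq]
    nth_rewrite 1 [← hC.star_eq]
    exact star_mul_self_nonneg C
  exact IsStrictlyPositive.nonneg_add hC2 (isStrictlyPositive_algebraMap (by positivity))

theorem sq_mul_sqAddInv (hC : IsSelfAdjoint C) {ε : ℝ} (hε : ε ≠ 0) :
    C ^ 2 * sqAddInv C ε = 1 - ε ^ 2 • sqAddInv C ε := by
  have h := Ring.mul_inverse_cancel _ (isStrictlyPositive_sq_add hC hε).isUnit
  unfold sqAddInv
  rw [add_mul, ← Algebra.smul_def] at h
  exact eq_sub_of_add_eq h

theorem sqAddInv_mem_commutant {T : E →ₗ.[ℂ] E} (hT : T.IsClosed) (hC : IsSelfAdjoint C)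
    (hCT : C ∈ T.commutant) {ε : ℝ} (hε : ε ≠ 0) : sqAddInv C ε ∈ T.commutant := by
  unfold sqAddInv
  refine Subalgebra.ringInverse_mem_of_isSelfAdjoint (isClosed_commutant hT)
    (isStrictlyPositive_sq_add hC hε).isSelfAdjoint (add_mem (pow_mem hCT 2) ?_)
  rw [Algebra.algebraMap_eq_smul_one, ← Complex.coe_smul]
  exact Subalgebra.smul_mem _ (one_mem _) _

theorem sq_norm_le_sq_norm_sq_add (hC : IsSelfAdjoint C) (ε : ℝ) (y : E) :
    ε ^ 4 * ‖y‖ ^ 2 + 2 * ε ^ 2 * ‖C y‖ ^ 2 ≤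
      ‖(C ^ 2 + algebraMap ℝ (E →L[ℂ] E) (ε ^ 2)) y‖ ^ 2 := by
  have hre : RCLike.re ⟪C (C y), (ε ^ 2 : ℝ) • y⟫_ℂ = ε ^ 2 * ‖C y‖ ^ 2 := by
    have hsymm : ⟪C (C y), y⟫_ℂ = ⟪C y, C y⟫_ℂ := hC.isSymmetric (C y) y
    rw [← Complex.coe_smul, inner_smul_right, hsymm, inner_self_eq_norm_sq_to_K]
    simp [← Complex.ofReal_pow]
  have h := norm_add_sq (𝕜 := ℂ) (C (C y)) ((ε ^ 2 : ℝ) • y)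
  have happly : (C ^ 2 + algebraMap ℝ (E →L[ℂ] E) (ε ^ 2)) y = C (C y) + (ε ^ 2 : ℝ) • y := by
    simp [sq, Algebra.algebraMap_eq_smul_one]
  rw [happly, h, hre, norm_smul, Real.norm_eq_abs, abs_of_nonneg (sq_nonneg ε)]
  nlinarith [sq_nonneg ‖C (C y)‖]

theorem sq_add_apply_sqAddInv (hC : IsSelfAdjoint C) {ε : ℝ} (hε : ε ≠ 0) (w : E) :
    (C ^ 2 + algebraMap ℝ (E →L[ℂ] E) (ε ^ 2)) (sqAddInv C ε w) = w := by
  rw [← mul_apply_eq_comp, sqAddInv,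
    Ring.mul_inverse_cancel _ (isStrictlyPositive_sq_add hC hε).isUnit, one_apply_eq_self]

theorem norm_sq_smul_sqAddInv_le_one (hC : IsSelfAdjoint C) (ε : ℝ) :
    ‖ε ^ 2 • sqAddInv C ε‖ ≤ 1 := by
  rcases eq_or_ne ε 0 with rfl | hε
  · simp
  refine ContinuousLinearMap.opNorm_le_bound _ zero_le_one fun w => ?_
  have h := sq_norm_le_sq_norm_sq_add hC ε (sqAddInv C ε w)
  rw [sq_add_apply_sqAddInv hC hε] at h
  show ‖ε ^ 2 • sqAddInv C ε w‖ ≤ 1 * ‖w‖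
  rw [one_mul, ← pow_le_pow_iff_left₀ (norm_nonneg _) (norm_nonneg w) two_ne_zero, norm_smul,
    mul_pow, Real.norm_eq_abs, sq_abs]
  nlinarith [sq_nonneg ‖C (sqAddInv C ε w)‖, sq_nonneg ε, show (ε ^ 2) ^ 2 = ε ^ 4 by ring]

theorem norm_sq_smul_sqAddInv_apply_le (hC : IsSelfAdjoint C) (ε : ℝ) (w : E) :
    ‖(ε ^ 2 • sqAddInv C ε) (C w)‖ ≤ |ε| * ‖w‖ := by
  rcases eq_or_ne ε 0 with rfl | hε
  · simp
  set y := sqAddInv C ε w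
  have h := sq_norm_le_sq_norm_sq_add hC ε y
  rw [sq_add_apply_sqAddInv hC hε] at h
  have hbound : |ε| * ‖C y‖ ≤ ‖w‖ := by
    rw [← pow_le_pow_iff_left₀ (by positivity) (norm_nonneg w) two_ne_zero, mul_pow, sq_abs]
    nlinarith [sq_nonneg ‖y‖, pow_two_nonneg (ε ^ 2)]
  have hCy : sqAddInv C ε (C w) = C y := by
    rw [← mul_apply_eq_comp, ← (commute_sqAddInv C ε).eq, mul_apply_eq_comp]
  show ‖ε ^ 2 • sqAddInv C ε (C w)‖ ≤ |ε| * ‖w‖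
  calc ‖ε ^ 2 • sqAddInv C ε (C w)‖ = |ε| * (|ε| * ‖C y‖) := by
        rw [hCy, norm_smul, Real.norm_eq_abs, abs_pow, ← mul_assoc, ← sq]
    _ ≤ |ε| * ‖w‖ := by gcongr

theorem tendsto_sq_smul_sqAddInv (hC : IsSelfAdjoint C) (hCd : DenseRange C) (z : E) :
    Tendsto (fun ε : ℝ => (ε ^ 2 • sqAddInv C ε) z) (𝓝 0) (𝓝 0) := by
  have hbdd : ∃ M, ∀ ε : ℝ, ‖ε ^ 2 • sqAddInv C ε‖ ≤ M := ⟨1, norm_sq_smul_sqAddInv_le_one hC⟩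
  have hequi : Equicontinuous fun ε : ℝ => ⇑(ε ^ 2 • sqAddInv C ε) :=
    ((NormedSpace.equicontinuous_TFAE fun ε : ℝ => ε ^ 2 • sqAddInv C ε).out 5 1).1 hbdd
  have hclosed := hequi.isClosed_setOfPred_tendsto (l := 𝓝 0) (f := fun _ => 0) continuous_const
  have hrange :
      Set.range C ⊆ {z | Tendsto (fun ε : ℝ => (ε ^ 2 • sqAddInv C ε) z) (𝓝 0) (𝓝 0)} := by
    rintro _ ⟨w, rfl⟩
    refine squeeze_zero_norm (norm_sq_smul_sqAddInv_apply_le hC · w) ?_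
    have h : Tendsto (fun ε : ℝ => |ε| * ‖w‖) (𝓝 0) (𝓝 (|0| * ‖w‖)) :=
      (continuous_abs.mul continuous_const).tendsto 0
    simpa using h
  exact hclosed.closure_subset_iff.2 hrange (hCd z)

theorem tendsto_sq_mul_sqAddInv_apply (hC : IsSelfAdjoint C) (hCd : DenseRange C) (z : E) :
    Tendsto (fun ε : ℝ => (C ^ 2 * sqAddInv C ε) z) (𝓝[≠] 0) (𝓝 z) := by
  have h : Tendsto (fun ε : ℝ => z - (ε ^ 2 • sqAddInv C ε) z) (𝓝[≠] 0) (𝓝 (z - 0)) :=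
    tendsto_const_nhds.sub ((tendsto_sq_smul_sqAddInv hC hCd z).mono_left nhdsWithin_le_nhds)
  rw [sub_zero] at h
  refine h.congr' (eventually_nhdsWithin_of_forall fun ε hε => ?_)
  show _ = (C ^ 2 * sqAddInv C ε) z
  rw [sq_mul_sqAddInv hC hε]
  rfl

end Regularization

section Product

variable {A B : H →ₗ.[ℂ] H}

theorem mem_graph_prodOp_iff {x z : H} :
    (x, z) ∈ (B.prodOp A).graph ↔ ∃ y, (x, y) ∈ A.graph ∧ (y, z) ∈ B.graph := by
  simp only [mem_graph_iff, Subtype.exists]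
  constructor
  · rintro ⟨x, ⟨hx, hAx⟩, rfl, rfl⟩
    exact ⟨A ⟨x, hx⟩, ⟨x, hx, rfl, rfl⟩, ⟨_, hAx, rfl, rfl⟩⟩
  · rintro ⟨_, ⟨x, hx, rfl, rfl⟩, ⟨_, hAx, rfl, rfl⟩⟩
    exact ⟨x, ⟨hx, hAx⟩, rfl, rfl⟩

variable {C : H →L[ℂ] H} (hBC : ∀ y z, (y, z) ∈ B.graph ↔ y = C z)
include hBC

theorem mem_graph_prodOp_iff_of_inverse {x z : H} :
    (x, z) ∈ (B.prodOp A).graph ↔ (x, C z) ∈ A.graph := by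
  rw [mem_graph_prodOp_iff]
  simp only [hBC, exists_eq_right]

theorem mem_commutant_of_prodOp_le (hAB : A.prodOp B ≤ B.prodOp A) : C ∈ A.commutant := by
  rintro ⟨y, z⟩ hyz
  have hCyz : (C y, z) ∈ (A.prodOp B).graph := mem_graph_prodOp_iff.2 ⟨y, (hBC _ _).2 rfl, hyz⟩
  exact (mem_graph_prodOp_iff_of_inverse hBC).1 (le_graph_of_le hAB hCyz)

theorem isClosed_prodOp (hA : A.IsClosed) : (B.prodOp A).IsClosed := by
  have hgraph :
      ((B.prodOp A).graph : Set (H × H)) = (fun p : H × H => (p.1, C p.2)) ⁻¹' A.graph :=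
    Set.ext fun _ => mem_graph_prodOp_iff_of_inverse hBC
  show _root_.IsClosed ((B.prodOp A).graph : Set (H × H))
  rw [hgraph]
  exact hA.preimage (continuous_fst.prodMk (C.continuous.comp continuous_snd))

theorem mem_commutant_prodOp (hCA : C ∈ A.commutant) : C ∈ (B.prodOp A).commutant := by
  rintro ⟨x, z⟩ hxz
  rw [mem_graph_prodOp_iff_of_inverse hBC] at hxz ⊢
  exact hCA _ hxz

theorem graph_adjoint_prodOp_le (hA : IsSelfAdjoint A) (hC : IsSelfAdjoint C)
    (hCA : C ∈ A.commutant) : (B.prodOp A).graph.adjoint ≤ (B.prodOp A).graph := by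
  rintro ⟨y, u⟩ hyu
  rw [mem_graph_prodOp_iff_of_inverse hBC,
    ← (isSelfAdjoint_iff_adjoint_graph_eq hA.dense_domain).1 hA, Submodule.mem_adjoint_iff]
  intro w a hwa
  have hCwa : (C w, a) ∈ (B.prodOp A).graph :=
    (mem_graph_prodOp_iff_of_inverse hBC).2 (hCA _ hwa)
  have hsymm : ⟪C w, u⟫_ℂ = ⟪w, C u⟫_ℂ := hC.isSymmetric w u
  rw [← hsymm]
  exact (Submodule.mem_adjoint_iff _ _).1 hyu _ _ hCwa

theorem inner_apply_eq_of_mem_graph_prodOp (hA : IsSelfAdjoint A) (hC : IsSelfAdjoint C)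
    {x u y v : H} (hxu : (x, u) ∈ (B.prodOp A).graph) (hyv : (y, v) ∈ (B.prodOp A).graph) :
    ⟪u, C y⟫_ℂ = ⟪C x, v⟫_ℂ := by
  rw [mem_graph_prodOp_iff_of_inverse hBC] at hxu hyv
  calc ⟪u, C y⟫_ℂ = ⟪C u, y⟫_ℂ := (hC.isSymmetric u y).symm
    _ = ⟪x, C v⟫_ℂ := hA.inner_eq_of_mem_graph hxu hyv
    _ = ⟪C x, v⟫_ℂ := (hC.isSymmetric x v).symm

theorem graph_prodOp_le_adjoint (hA : IsSelfAdjoint A) (hC : IsSelfAdjoint C)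
    (hCA : C ∈ A.commutant) (hCd : DenseRange C) :
    (B.prodOp A).graph ≤ (B.prodOp A).graph.adjoint := by
  rintro ⟨y, v⟩ hyv
  rw [Submodule.mem_adjoint_iff]
  intro x u hxu
  have hCT := mem_commutant_prodOp hBC hCA
  have hregular :
      ∀ ε ≠ (0 : ℝ), ⟪u, (C ^ 2 * sqAddInv C ε) y⟫_ℂ = ⟪x, (C ^ 2 * sqAddInv C ε) v⟫_ℂ := by
    intro ε hε
    have hR : C * sqAddInv C ε ∈ (B.prodOp A).commutant :=
      mul_mem hCT (sqAddInv_mem_commutant (isClosed_prodOp hBC hA.isClosed) hC hCT hε)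
    simp only [sq, mul_assoc, mul_apply_eq_comp]
    calc ⟪u, C ((C * sqAddInv C ε) y)⟫_ℂ = ⟪C x, (C * sqAddInv C ε) v⟫_ℂ :=
          inner_apply_eq_of_mem_graph_prodOp hBC hA hC hxu (hR _ hyv)
      _ = ⟪x, C ((C * sqAddInv C ε) v)⟫_ℂ := hC.isSymmetric _ _
  refine sub_eq_zero.2 (tendsto_nhds_unique ?_
    (tendsto_const_nhds.inner (tendsto_sq_mul_sqAddInv_apply hC hCd v)))
  exact (tendsto_const_nhds.inner (tendsto_sq_mul_sqAddInv_apply hC hCd y)).congr'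
    (eventually_nhdsWithin_of_forall hregular)

end Product

end LinearPMap

/-- If `A` and `B` are unbounded self-adjoint operators with `B` invertible,
`AB ⊂ BA` and `AB` densely defined, then `BA` is self-adjoint. -/
theorem BA_selfAdjoint (A B : H →ₗ.[ℂ] H)
    (hA : IsSelfAdjoint A) (hB : IsSelfAdjoint B)
    (hBinv : B.IsInvertibleOp)
    (hABBA : A.prodOp B ≤ B.prodOp A)
    (hABdense : (A.prodOp B).DenselyDefined) :
    IsSelfAdjoint (B.prodOp A) := by
  obtain ⟨C, hBC⟩ := hBinv.exists_mem_graph_iff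
  have hC : IsSelfAdjoint C := isSelfAdjoint_of_mem_graph_iff hB hBC
  have hCA : C ∈ A.commutant := mem_commutant_of_prodOp_le hBC hABBA
  have hCd : DenseRange C := hB.dense_domain.mono fun y hy =>
    ⟨B ⟨y, hy⟩, ((hBC _ _).1 (B.mem_graph ⟨y, hy⟩)).symm⟩
  rw [isSelfAdjoint_iff_adjoint_graph_eq (hABdense.mono hABBA.1)]
  exact le_antisymm (graph_adjoint_prodOp_le hBC hA hC hCA)
    (graph_prodOp_le_adjoint hBC hA hC hCA hCd)
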